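/- arXiv:2406.15056 — 2 statements merged into one kernel-verified Lean document; each statement's English description precedes it below -/
import Mathlib

section
/- Let H₁, H₂ : A → ℂ be square-integrable with ∫|H₂|² > 0 and let J₁, J₂ be arbitrary square-integrable currents. Define P₂ = |∫H₂J₂|²/(∫|H₂|²·(1+|∫H₂J₁|²)) and P₁ = |∫H₁J₁|²/(∫|H₁|² - P₂|∫H₁*H₂|²/(1+P₂∫|H₂|²)). Then P₁ + P₂ ≤ ∫|J₁|² + ∫|J₂|². -/
/-!
Regard `conj H₁`, `conj H₂`, `J₁`, `J₂` as vectors `u`, `w`, `x`, `y` of `L²`, so that every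
integral is an inner product. For the whitening operator `T = I + P₂ w w*`, Cauchy–Schwarz in
the inner product `⟨T ·, ·⟩` gives `|⟨u, x⟩|² ≤ ⟨x, T x⟩ ⟨u, T⁻¹ u⟩`, that is
`P₁ ≤ ‖x‖² + P₂ |⟨w, x⟩|²`, while plain Cauchy–Schwarz gives `P₂ (1 + |⟨w, x⟩|²) ≤ ‖y‖²`.
Adding the two bounds proves the theorem.
-/

open MeasureTheory ComplexConjugate
open scoped InnerProductSpace

lemma sq_add_mul_le_mul (a b x y : ℝ) {μ : ℝ} (hμ : 0 ≤ μ) :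
    (a * x + μ * b * y) ^ 2 ≤ (x ^ 2 + μ * y ^ 2) * (a ^ 2 + μ * b ^ 2) := by
  nlinarith [mul_nonneg hμ (sq_nonneg (a * y - b * x))]

section Whitening

variable {E : Type*} [NormedAddCommGroup E] [InnerProductSpace ℂ E]

/-- By Sherman–Morrison, `v = (I + μ w w*)⁻¹ u`, and the right-hand side is
`⟨u, (I + μ w w*)⁻¹ u⟩`. -/
lemma exists_whitening_decomposition (u w : E) {μ : ℝ} (hμ : 0 ≤ μ) :
    ∃ (v : E) (s : ℂ), u = v + (μ * s) • w ∧
      ‖v‖ ^ 2 + μ * ‖s‖ ^ 2 = ‖u‖ ^ 2 - μ * ‖⟪w, u⟫_ℂ‖ ^ 2 / (1 + μ * ‖w‖ ^ 2) := by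
  set z := ⟪w, u⟫_ℂ
  set D := 1 + μ * ‖w‖ ^ 2
  have hD : 0 < D := by positivity
  refine ⟨u - (μ * (z / D)) • w, z / D, by abel, ?_⟩
  have hcross : ⟪u, (μ * (z / D) : ℂ) • w⟫_ℂ = ((μ * ‖z‖ ^ 2 / D : ℝ) : ℂ) := by
    rw [inner_smul_right, ← inner_conj_symm, mul_assoc, div_mul_eq_mul_div, Complex.mul_conj']
    push_cast
    ring
  rw [@norm_sub_sq ℂ, hcross, RCLike.re_to_complex, Complex.ofReal_re, norm_smul, norm_mul,
    norm_div, Complex.norm_real, Complex.norm_real, Real.norm_of_nonneg hμ,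
    Real.norm_of_nonneg hD.le]
  field_simp
  ring

lemma whitened_norm_sq_nonneg (u w : E) {μ : ℝ} (hμ : 0 ≤ μ) :
    0 ≤ ‖u‖ ^ 2 - μ * ‖⟪w, u⟫_ℂ‖ ^ 2 / (1 + μ * ‖w‖ ^ 2) := by
  obtain ⟨v, s, -, hvs⟩ := exists_whitening_decomposition u w hμ
  rw [← hvs]
  positivity

theorem norm_inner_sq_le_whitened (u w x : E) {μ : ℝ} (hμ : 0 ≤ μ) :
    ‖⟪u, x⟫_ℂ‖ ^ 2 ≤
      (‖x‖ ^ 2 + μ * ‖⟪w, x⟫_ℂ‖ ^ 2) * (‖u‖ ^ 2 - μ * ‖⟪w, u⟫_ℂ‖ ^ 2 / (1 + μ * ‖w‖ ^ 2)) := by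
  obtain ⟨v, s, rfl, hvs⟩ := exists_whitening_decomposition u w hμ
  have htri : ‖⟪v + (μ * s : ℂ) • w, x⟫_ℂ‖ ≤ ‖v‖ * ‖x‖ + μ * ‖s‖ * ‖⟪w, x⟫_ℂ‖ := by
    rw [inner_add_left, inner_smul_left]
    refine (norm_add_le _ _).trans (add_le_add (norm_inner_le_norm v x) (le_of_eq ?_))
    rw [norm_mul, RCLike.norm_conj, norm_mul, Complex.norm_real, Real.norm_of_nonneg hμ]
  calc ‖⟪v + (μ * s : ℂ) • w, x⟫_ℂ‖ ^ 2
      ≤ (‖v‖ * ‖x‖ + μ * ‖s‖ * ‖⟪w, x⟫_ℂ‖) ^ 2 := pow_le_pow_left₀ (norm_nonneg _) htri 2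
    _ ≤ (‖x‖ ^ 2 + μ * ‖⟪w, x⟫_ℂ‖ ^ 2) * (‖v‖ ^ 2 + μ * ‖s‖ ^ 2) :=
      sq_add_mul_le_mul _ _ _ _ hμ
    _ = _ := by rw [hvs]

theorem norm_inner_sq_div_whitened_le (u w x : E) {μ : ℝ} (hμ : 0 ≤ μ) :
    ‖⟪u, x⟫_ℂ‖ ^ 2 / (‖u‖ ^ 2 - μ * ‖⟪w, u⟫_ℂ‖ ^ 2 / (1 + μ * ‖w‖ ^ 2)) ≤
      ‖x‖ ^ 2 + μ * ‖⟪w, x⟫_ℂ‖ ^ 2 :=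
  div_le_of_le_mul₀ (whitened_norm_sq_nonneg u w hμ) (by positivity)
    (norm_inner_sq_le_whitened u w x hμ)

end Whitening

section L2

variable {α : Type*} {m : MeasurableSpace α} {μ : Measure α} {f g : α → ℂ}

lemma MeasureTheory.MemLp.inner_toLp_eq_integral (hf : MemLp f 2 μ) (hg : MemLp g 2 μ) :
    ⟪hf.toLp f, hg.toLp g⟫_ℂ = ∫ r, conj (f r) * g r ∂μ := by
  rw [L2.inner_def]
  refine integral_congr_ae ?_
  filter_upwards [hf.coeFn_toLp, hg.coeFn_toLp] with r hfr hgr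
  rw [hfr, hgr, RCLike.inner_apply']

lemma MeasureTheory.MemLp.norm_toLp_sq_eq_integral (hf : MemLp f 2 μ) :
    ‖hf.toLp f‖ ^ 2 = ∫ r, ‖f r‖ ^ 2 ∂μ := by
  have h := hf.inner_toLp_eq_integral hf
  rw [inner_self_eq_norm_sq_to_K] at h
  simp_rw [RCLike.conj_mul, ← RCLike.ofReal_pow, integral_ofReal] at h
  exact_mod_cast h

end L2

theorem dual_uplink_power_constraint_general {α : Type*} [MeasureSpace α]
    (H₁ H₂ J₁ J₂ : α → ℂ)
    (hH₁ : MemLp H₁ 2) (hH₂ : MemLp H₂ 2) (hJ₁ : MemLp J₁ 2) (hJ₂ : MemLp J₂ 2)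
    (P₁ P₂ : ℝ)
    (hP₂ : P₂ = ‖∫ r, H₂ r * J₂ r‖ ^ 2 /
      ((∫ r, ‖H₂ r‖ ^ 2) * (1 + ‖∫ r, H₂ r * J₁ r‖ ^ 2)))
    (hP₁ : P₁ = ‖∫ r, H₁ r * J₁ r‖ ^ 2 /
      ((∫ r, ‖H₁ r‖ ^ 2) -
        P₂ * ‖∫ r, conj (H₁ r) * H₂ r‖ ^ 2 /
          (1 + P₂ * ∫ r, ‖H₂ r‖ ^ 2))) :
    P₁ + P₂ ≤ (∫ r, ‖J₁ r‖ ^ 2) + (∫ r, ‖J₂ r‖ ^ 2) := by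
  have hu := hH₁.star.norm_toLp_sq_eq_integral
  have hw := hH₂.star.norm_toLp_sq_eq_integral
  have hx := hJ₁.norm_toLp_sq_eq_integral
  have hy := hJ₂.norm_toLp_sq_eq_integral
  have hux := hH₁.star.inner_toLp_eq_integral hJ₁
  have hwx := hH₂.star.inner_toLp_eq_integral hJ₁
  have hwy := hH₂.star.inner_toLp_eq_integral hJ₂
  have hwu := hH₂.star.inner_toLp_eq_integral hH₁.star
  simp only [Pi.star_apply, Complex.star_def, Complex.norm_conj, Complex.conj_conj]
    at hu hw hux hwx hwy hwu
  simp only [mul_comm (H₂ _)] at hwu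
  have hP₂_nonneg : 0 ≤ P₂ := hP₂ ▸ by positivity
  have hP₁_le : P₁ ≤ (∫ r, ‖J₁ r‖ ^ 2) + P₂ * ‖∫ r, H₂ r * J₁ r‖ ^ 2 := by
    have h := norm_inner_sq_div_whitened_le (hH₁.star.toLp _) (hH₂.star.toLp _) (hJ₁.toLp _)
      hP₂_nonneg
    rwa [hu, hw, hx, hux, hwx, hwu, ← hP₁] at h
  have hP₂_le : P₂ * (1 + ‖∫ r, H₂ r * J₁ r‖ ^ 2) ≤ ∫ r, ‖J₂ r‖ ^ 2 := by
    have hcs : ‖∫ r, H₂ r * J₂ r‖ ^ 2 ≤ (∫ r, ‖J₂ r‖ ^ 2) * ∫ r, ‖H₂ r‖ ^ 2 := by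
      rw [← hwy, ← hw, ← hy, ← mul_pow, mul_comm]
      exact pow_le_pow_left₀ (norm_nonneg _) (norm_inner_le_norm _ _) 2
    rw [hP₂, div_mul_eq_mul_div, mul_div_mul_right _ _ (by positivity)]
    exact div_le_of_le_mul₀ (by positivity) (by positivity) hcs
  linarith

/-- Downlink-to-uplink transformation: the dual uplink powers `P₁, P₂` built
from arbitrary downlink currents `J₁, J₂` satisfy the same sum power
constraint: `P₁ + P₂ ≤ ∫|J₁|² + ∫|J₂|²`. -/
theorem dual_uplink_power_constraint {α : Type*} [MeasureSpace α]
    (H₁ H₂ J₁ J₂ : α → ℂ)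
    (hH₁ : MemLp H₁ 2) (hH₂ : MemLp H₂ 2) (hJ₁ : MemLp J₁ 2) (hJ₂ : MemLp J₂ 2)
    (hg₂ : 0 < ∫ r, ‖H₂ r‖ ^ 2)
    (P₁ P₂ : ℝ)
    (hP₂ : P₂ = ‖∫ r, H₂ r * J₂ r‖ ^ 2 /
      ((∫ r, ‖H₂ r‖ ^ 2) * (1 + ‖∫ r, H₂ r * J₁ r‖ ^ 2)))
    (hden : 0 < (∫ r, ‖H₁ r‖ ^ 2) -
      P₂ * ‖∫ r, conj (H₁ r) * H₂ r‖ ^ 2 /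
        (1 + P₂ * ∫ r, ‖H₂ r‖ ^ 2))
    (hP₁ : P₁ = ‖∫ r, H₁ r * J₁ r‖ ^ 2 /
      ((∫ r, ‖H₁ r‖ ^ 2) -
        P₂ * ‖∫ r, conj (H₁ r) * H₂ r‖ ^ 2 /
          (1 + P₂ * ∫ r, ‖H₂ r‖ ^ 2))) :
    P₁ + P₂ ≤ (∫ r, ‖J₁ r‖ ^ 2) + (∫ r, ‖J₂ r‖ ^ 2) :=
  dual_uplink_power_constraint_general H₁ H₂ J₁ J₂ hH₁ hH₂ hJ₁ hJ₂ P₁ P₂ hP₂ hP₁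
end

section
/- Let A = [-Lx/2, Lx/2] × [-Lz/2, Lz/2] ⊆ ℝ², let r > 0, and let Φ, Ψ, Θ be direction cosines with Ψ > 0 and Φ²+Ψ²+Θ² = 1. Then (rΨ/(4π)) ∫∫_A (x² + z² - 2r(Φx + Θz) + r²)^{-3/2} dx dz = (1/(4π)) Σ_{x∈X} Σ_{z∈Z} arctan( (xz/Ψ) / √(Ψ² + x² + z²) ), where X = {Lx/(2r) + Φ, Lx/(2r) - Φ} and Z = {Lz/(2r) + Θ, Lz/(2r) - Θ}. -/
open Real

/-!
Since `Φ² + Ψ² + Θ² = 1`, the integrand is `((rΨ)² + (x - rΦ)² + (z - rΘ)²) ^ (-3/2)`, so after a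
translation `rΨ` times the integral is the solid angle subtended by a rectangle at height `a = rΨ`.
Integrating first in `u` (antiderivative `u / (b √(b + u²))`, `b = a² + w²`) and then in `w`
(antiderivative of the result: `arctan (u w / (a √(a² + u² + w²)))`) expresses it as an alternating
sum over the four corners. This corner term is invariant under scaling `(a, u, w)` by `r > 0` and odd
in `u` and in `w`, which turns the four corners into the four arctangents.
-/

theorem hasDerivAt_div_mul_sqrt_add_sq {b : ℝ} (hb : 0 < b) (t : ℝ) :
    HasDerivAt (fun t => t / (b * √(b + t ^ 2))) ((b + t ^ 2) ^ (-(3 : ℝ) / 2)) t := by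
  have hpos : 0 < b + t ^ 2 := by positivity
  have hsqrt : HasDerivAt (fun t => b * √(b + t ^ 2)) (b * (2 * t / (2 * √(b + t ^ 2)))) t := by
    simpa using (((hasDerivAt_pow 2 t).const_add b).sqrt hpos.ne').const_mul b
  refine ((hasDerivAt_id t).div hsqrt (by positivity)).congr_deriv ?_
  have hs : √(b + t ^ 2) ^ 2 = b + t ^ 2 := sq_sqrt hpos.le
  have hrpow : (b + t ^ 2) ^ (-(3 : ℝ) / 2) = 1 / (√(b + t ^ 2) * (b + t ^ 2)) := by
    rw [show -(3 : ℝ) / 2 = -(1 / 2 + 1) by norm_num, rpow_neg hpos.le, rpow_add hpos, rpow_one,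
      ← sqrt_eq_rpow, one_div]
  rw [hrpow, id]
  have : 0 < √(b + t ^ 2) := sqrt_pos.mpr hpos
  field_simp
  linear_combination t ^ 2 * hs

theorem integral_add_sq_rpow_neg_three_halves {b : ℝ} (hb : 0 < b) (t₁ t₂ : ℝ) :
    ∫ t in t₁..t₂, (b + t ^ 2) ^ (-(3 : ℝ) / 2) =
      t₂ / (b * √(b + t₂ ^ 2)) - t₁ / (b * √(b + t₁ ^ 2)) :=
  intervalIntegral.integral_eq_sub_of_hasDerivAt (fun t _ => hasDerivAt_div_mul_sqrt_add_sq hb t)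
    (((continuous_const.add (continuous_pow 2)).rpow_const
      fun t => Or.inl (add_pos_of_pos_of_nonneg hb (sq_nonneg t)).ne').intervalIntegrable _ _)

/-- The solid angle subtended by the rectangle `[0, u] × [0, w]` from the point at height `a` above
its corner `0`. -/
noncomputable def rectSolidAngle (a u w : ℝ) : ℝ := arctan (u * w / a / √(a ^ 2 + u ^ 2 + w ^ 2))

theorem rectSolidAngle_neg_left (a u w : ℝ) : rectSolidAngle a (-u) w = -rectSolidAngle a u w := by
  simp only [rectSolidAngle, neg_sq, neg_mul, neg_div, arctan_neg]

theorem rectSolidAngle_neg_right (a u w : ℝ) :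
    rectSolidAngle a u (-w) = -rectSolidAngle a u w := by
  simp only [rectSolidAngle, neg_sq, mul_neg, neg_div, arctan_neg]

theorem rectSolidAngle_mul {r : ℝ} (hr : 0 < r) (a u w : ℝ) :
    rectSolidAngle (r * a) (r * u) (r * w) = rectSolidAngle a u w := by
  unfold rectSolidAngle
  rw [show (r * a) ^ 2 + (r * u) ^ 2 + (r * w) ^ 2 = r ^ 2 * (a ^ 2 + u ^ 2 + w ^ 2) by ring,
    sqrt_mul (sq_nonneg r), sqrt_sq hr.le]
  congr 1
  field_simp

theorem hasDerivAt_rectSolidAngle {a : ℝ} (ha : a ≠ 0) (u w : ℝ) :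
    HasDerivAt (rectSolidAngle a u) (a * u / ((a ^ 2 + w ^ 2) * √(a ^ 2 + u ^ 2 + w ^ 2))) w := by
  have hpos : 0 < a ^ 2 + u ^ 2 + w ^ 2 := by positivity
  have hsqrt : HasDerivAt (fun w => √(a ^ 2 + u ^ 2 + w ^ 2))
      (2 * w / (2 * √(a ^ 2 + u ^ 2 + w ^ 2))) w := by
    simpa using ((hasDerivAt_pow 2 w).const_add (a ^ 2 + u ^ 2)).sqrt hpos.ne'
  have hquot := (((hasDerivAt_id w).const_mul u).div_const a).div hsqrt (by positivity)
  refine hquot.arctan.congr_deriv ?_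
  have hs : √(a ^ 2 + u ^ 2 + w ^ 2) ^ 2 = a ^ 2 + u ^ 2 + w ^ 2 := sq_sqrt hpos.le
  have : 0 < √(a ^ 2 + u ^ 2 + w ^ 2) := sqrt_pos.mpr hpos
  have : 0 < a ^ 2 + w ^ 2 := by positivity
  simp only [Pi.div_apply, id, mul_one]
  rw [div_pow, div_pow]
  field_simp
  linear_combination u * w ^ 2 * hs

theorem mul_integral_rectangle {a : ℝ} (ha : a ≠ 0) (u₁ u₂ w₁ w₂ : ℝ) :
    a * ∫ w in w₁..w₂, ∫ u in u₁..u₂, (a ^ 2 + u ^ 2 + w ^ 2) ^ (-(3 : ℝ) / 2) =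
      rectSolidAngle a u₂ w₂ - rectSolidAngle a u₂ w₁ -
        (rectSolidAngle a u₁ w₂ - rectSolidAngle a u₁ w₁) := by
  have hinner (w : ℝ) : a * ∫ u in u₁..u₂, (a ^ 2 + u ^ 2 + w ^ 2) ^ (-(3 : ℝ) / 2) =
      a * u₂ / ((a ^ 2 + w ^ 2) * √(a ^ 2 + u₂ ^ 2 + w ^ 2)) -
        a * u₁ / ((a ^ 2 + w ^ 2) * √(a ^ 2 + u₁ ^ 2 + w ^ 2)) := by
    have hb : 0 < a ^ 2 + w ^ 2 := by positivity
    simp_rw [add_right_comm _ _ (w ^ 2)]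
    rw [integral_add_sq_rpow_neg_three_halves hb]
    ring
  have hcont (u : ℝ) :
      Continuous fun w => a * u / ((a ^ 2 + w ^ 2) * √(a ^ 2 + u ^ 2 + w ^ 2)) :=
    continuous_const.div (by fun_prop) fun w => by positivity
  rw [← intervalIntegral.integral_const_mul, intervalIntegral.integral_congr fun w _ => hinner w,
    intervalIntegral.integral_sub ((hcont u₂).intervalIntegrable _ _)
      ((hcont u₁).intervalIntegrable _ _),
    intervalIntegral.integral_eq_sub_of_hasDerivAt
      (fun w _ => hasDerivAt_rectSolidAngle ha u₂ w) ((hcont u₂).intervalIntegrable _ _),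
    intervalIntegral.integral_eq_sub_of_hasDerivAt
      (fun w _ => hasDerivAt_rectSolidAngle ha u₁ w) ((hcont u₁).intervalIntegrable _ _)]

theorem integral_integral_comp_sub {E : Type*} [NormedAddCommGroup E] [NormedSpace ℝ E]
    (f : ℝ → ℝ → E) (x₁ x₂ z₁ z₂ p q : ℝ) :
    ∫ z in z₁..z₂, ∫ x in x₁..x₂, f (x - p) (z - q) =
      ∫ w in z₁ - q..z₂ - q, ∫ u in x₁ - p..x₂ - p, f u w := by
  have hinner (z : ℝ) : ∫ x in x₁..x₂, f (x - p) (z - q) = ∫ u in x₁ - p..x₂ - p, f u (z - q) :=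
    intervalIntegral.integral_comp_sub_right (fun u => f u (z - q)) p
  simp only [hinner]
  exact intervalIntegral.integral_comp_sub_right (fun w => ∫ u in x₁ - p..x₂ - p, f u w) q

theorem planar_capa_channel_gain_general (Lx Lz r Φ Ψ Θ : ℝ)
    (hr : 0 < r) (hΨ : 0 < Ψ)
    (hdir : Φ ^ 2 + Ψ ^ 2 + Θ ^ 2 = 1) :
    (r * Ψ / (4 * π)) *
      ∫ z in (-Lz / 2)..(Lz / 2), ∫ x in (-Lx / 2)..(Lx / 2),
        (x ^ 2 + z ^ 2 - 2 * r * (Φ * x + Θ * z) + r ^ 2) ^ (-(3 : ℝ) / 2) =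
    (1 / (4 * π)) *
      ((arctan ((Lx / (2 * r) + Φ) * (Lz / (2 * r) + Θ) / Ψ /
          Real.sqrt (Ψ ^ 2 + (Lx / (2 * r) + Φ) ^ 2 + (Lz / (2 * r) + Θ) ^ 2))) +
       (arctan ((Lx / (2 * r) + Φ) * (Lz / (2 * r) - Θ) / Ψ /
          Real.sqrt (Ψ ^ 2 + (Lx / (2 * r) + Φ) ^ 2 + (Lz / (2 * r) - Θ) ^ 2))) +
       (arctan ((Lx / (2 * r) - Φ) * (Lz / (2 * r) + Θ) / Ψ /
          Real.sqrt (Ψ ^ 2 + (Lx / (2 * r) - Φ) ^ 2 + (Lz / (2 * r) + Θ) ^ 2))) +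
       (arctan ((Lx / (2 * r) - Φ) * (Lz / (2 * r) - Θ) / Ψ /
          Real.sqrt (Ψ ^ 2 + (Lx / (2 * r) - Φ) ^ 2 + (Lz / (2 * r) - Θ) ^ 2)))) := by
  have hsquare (x z : ℝ) : x ^ 2 + z ^ 2 - 2 * r * (Φ * x + Θ * z) + r ^ 2 =
      (r * Ψ) ^ 2 + (x - r * Φ) ^ 2 + (z - r * Θ) ^ 2 := by
    linear_combination -r ^ 2 * hdir
  have hcorner (L Ξ : ℝ) : L / 2 - r * Ξ = r * (L / (2 * r) - Ξ) ∧
      -L / 2 - r * Ξ = -(r * (L / (2 * r) + Ξ)) :=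
    ⟨by field_simp, by field_simp; ring⟩
  have hshift : ∫ z in (-Lz / 2)..(Lz / 2), ∫ x in (-Lx / 2)..(Lx / 2),
        (x ^ 2 + z ^ 2 - 2 * r * (Φ * x + Θ * z) + r ^ 2) ^ (-(3 : ℝ) / 2) =
      ∫ w in -Lz / 2 - r * Θ..Lz / 2 - r * Θ, ∫ u in -Lx / 2 - r * Φ..Lx / 2 - r * Φ,
        ((r * Ψ) ^ 2 + u ^ 2 + w ^ 2) ^ (-(3 : ℝ) / 2) := by
    simp only [hsquare]
    exact integral_integral_comp_sub (fun u w => ((r * Ψ) ^ 2 + u ^ 2 + w ^ 2) ^ (-(3 : ℝ) / 2)) ..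
  rw [hshift, div_mul_eq_mul_div, mul_integral_rectangle (mul_pos hr hΨ).ne',
    (hcorner Lx Φ).1, (hcorner Lx Φ).2, (hcorner Lz Θ).1, (hcorner Lz Θ).2]
  simp only [rectSolidAngle_neg_left, rectSolidAngle_neg_right, rectSolidAngle_mul hr]
  unfold rectSolidAngle
  ring

/-- Closed-form channel gain of a planar CAPA: the double integral of the
squared LoS channel magnitude over the rectangular aperture equals a sum of
four arctangent terms. -/
theorem planar_capa_channel_gain (Lx Lz r Φ Ψ Θ : ℝ)
    (hLx : 0 < Lx) (hLz : 0 < Lz) (hr : 0 < r) (hΨ : 0 < Ψ)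
    (hdir : Φ ^ 2 + Ψ ^ 2 + Θ ^ 2 = 1) :
    (r * Ψ / (4 * π)) *
      ∫ z in (-Lz / 2)..(Lz / 2), ∫ x in (-Lx / 2)..(Lx / 2),
        (x ^ 2 + z ^ 2 - 2 * r * (Φ * x + Θ * z) + r ^ 2) ^ (-(3 : ℝ) / 2) =
    (1 / (4 * π)) *
      ((arctan ((Lx / (2 * r) + Φ) * (Lz / (2 * r) + Θ) / Ψ /
          Real.sqrt (Ψ ^ 2 + (Lx / (2 * r) + Φ) ^ 2 + (Lz / (2 * r) + Θ) ^ 2))) +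
       (arctan ((Lx / (2 * r) + Φ) * (Lz / (2 * r) - Θ) / Ψ /
          Real.sqrt (Ψ ^ 2 + (Lx / (2 * r) + Φ) ^ 2 + (Lz / (2 * r) - Θ) ^ 2))) +
       (arctan ((Lx / (2 * r) - Φ) * (Lz / (2 * r) + Θ) / Ψ /
          Real.sqrt (Ψ ^ 2 + (Lx / (2 * r) - Φ) ^ 2 + (Lz / (2 * r) + Θ) ^ 2))) +
       (arctan ((Lx / (2 * r) - Φ) * (Lz / (2 * r) - Θ) / Ψ /
          Real.sqrt (Ψ ^ 2 + (Lx / (2 * r) - Φ) ^ 2 + (Lz / (2 * r) - Θ) ^ 2)))) :=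
  planar_capa_channel_gain_general Lx Lz r Φ Ψ Θ hr hΨ hdir
end
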